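/- Suppose (R, ≤, r) satisfies axioms A.1–A.4 and R is metrically closed in AR^ℕ. Then for every k < ω, every B ∈ R, and every finite coloring of AR_k, there exists A ∈ R with A ≤ B such that AR_k|A = {a ∈ AR_k : a ≤_fin r_m(A) for some m} is monochromatic. -/

import Mathlib

open Topology

/-- The data of an abstract topological Ramsey space `(R, ≤, r)` with
finitized quasi-order `≤_fin`.  The type `Ap` plays the role of the set `AR`
of all finite approximations. -/
structure RamseyBase where
  R : Type
  Ap : Type
  le : R → R → Prop
  r : ℕ → R → Ap
  lefin : Ap → Ap → Prop

namespace RamseyBase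

variable (D : RamseyBase)

/-- `AR_n`, the set of length-`n` approximations. -/
def AR (n : ℕ) : Set D.Ap := Set.range (D.r n)

/-- `|a| = n`, i.e. `a` is a length-`n` approximation. -/
def len (a : D.Ap) (n : ℕ) : Prop := a ∈ D.AR n

/-- `a ⊑ b` : `a` is an initial segment of `b`. -/
def sq (a b : D.Ap) : Prop := ∃ (B : D.R) (n m : ℕ), m ≤ n ∧ b = D.r n B ∧ a = D.r m B

/-- The basic set `[a,B] = {C ∈ R : C ≤ B and r_n(C) = a for some n}`. -/
def ell (a : D.Ap) (B : D.R) : Set D.R := {C | D.le C B ∧ ∃ n, D.r n C = a}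

/-- `r_n[a,A] = {r_n(C) : C ∈ [a,A]}`. -/
def rset (n : ℕ) (a : D.Ap) (A : D.R) : Set D.Ap := (D.r n) '' (D.ell a A)

/-- `depth_B(a) = n` : `n` is the least integer with `a ≤_fin r_n(B)`. -/
def hasDepth (B : D.R) (a : D.Ap) (n : ℕ) : Prop :=
  D.lefin a (D.r n B) ∧ ∀ m < n, ¬ D.lefin a (D.r m B)

/-- `AR_k|A = {a ∈ AR_k : a ≤_fin r_m(A) for some m}`. -/
def ARres (k : ℕ) (A : D.R) : Set D.Ap := {a | a ∈ D.AR k ∧ ∃ m, D.lefin a (D.r m A)}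

/-- The Tychonoff (product) topology on `(AR)^ℕ`, with `AR` discrete. -/
def topSeq : TopologicalSpace (ℕ → D.Ap) :=
  @Pi.topologicalSpace ℕ (fun _ => D.Ap) (fun _ => ⊥)

/-- `R` is metrically closed in `(AR)^ℕ`. -/
def RClosed : Prop := IsClosed[D.topSeq] (Set.range (fun (B : D.R) (n : ℕ) => D.r n B))

/-- Axioms **A.1**–**A.4** for `(R, ≤, r)`, together with the standing
assumptions that `R` is nonempty, `≤` and `≤_fin` are quasi-orders, and every
element of `Ap` is an approximation. -/
structure BaseAxioms (D : RamseyBase) : Prop where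
  R_nonempty : Nonempty D.R
  le_refl : ∀ A, D.le A A
  le_trans : ∀ A B C, D.le A B → D.le B C → D.le A C
  lefin_refl : ∀ a, D.lefin a a
  lefin_trans : ∀ a b c, D.lefin a b → D.lefin b c → D.lefin a c
  ap_approx : ∀ a : D.Ap, ∃ n, a ∈ D.AR n
  -- A.1
  a1a : ∀ A B, D.r 0 A = D.r 0 B
  a1b : ∀ A B : D.R, A ≠ B → ∃ n, D.r n A ≠ D.r n B
  a1c : ∀ A B n m, D.r n A = D.r m B → n = m ∧ ∀ j < n, D.r j A = D.r j B
  -- A.2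
  a2a : ∀ b, {a | D.lefin a b}.Finite
  a2b : ∀ A B, D.le A B ↔ ∀ n, ∃ m, D.lefin (D.r n A) (D.r m B)
  a2c : ∀ a b c, D.sq a b → D.lefin b c → ∃ d, D.sq d c ∧ D.lefin a d
  -- A.3
  a3a : ∀ B a n, D.hasDepth B a n → ∀ A ∈ D.ell (D.r n B) B, (D.ell a A).Nonempty
  a3b : ∀ A B a, D.le A B → (D.ell a A).Nonempty →
    ∃ n, D.hasDepth B a n ∧
      ∃ A' ∈ D.ell (D.r n B) B, (D.ell a A').Nonempty ∧ D.ell a A' ⊆ D.ell a A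
  -- A.4
  a4 : ∀ B a n m (O : Set D.Ap), D.hasDepth B a n → D.len a m → O ⊆ D.AR (m + 1) →
    ∃ A ∈ D.ell (D.r n B) B, D.rset (m + 1) a A ⊆ O ∨ D.rset (m + 1) a A ∩ O = ∅

end RamseyBase

/-!
Induction on `k`, the case `k = 0` being A.1. For the step, colour `AR_{k+1}` by `c`.
Using A.4 once per colour and once per approximation (A.2 makes the latter finite), build a
fusion sequence `B = A₀ ≥ A₁ ≥ ⋯` with `A_{m+1} ∈ [r_m(A_m), A_m]` such that for every
`a ∈ AR_k` of depth `m` in `A_m`, all one-step extensions `r_{k+1}[a, A_{m+1}]` get one colour.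
Metric closedness yields a limit `L` below every `A_m`, for which every `a ∈ AR_k|L` has
monochromatic extensions in `L`. Colouring `a` by the colour of its extensions and applying the
induction hypothesis below `L` finishes the proof, since by A.3(a) every element of
`AR_{k+1}|A` extends some element of `AR_k|A`.
-/

namespace RamseyBase

variable {D : RamseyBase}

def IsFusionSeq (A : ℕ → D.R) : Prop := ∀ m, A (m + 1) ∈ D.ell (D.r m (A m)) (A m)

theorem hasDepth_congr {C' C : D.R} {a : D.Ap} {d : ℕ} (h : ∀ j ≤ d, D.r j C' = D.r j C) :
    D.hasDepth C' a d ↔ D.hasDepth C a d := by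
  unfold hasDepth
  rw [h d le_rfl]
  exact and_congr_right' (forall₂_congr fun m hm => by rw [h m hm.le])

theorem exists_hasDepth {C : D.R} {a : D.Ap} {m : ℕ} (h : D.lefin a (D.r m C)) :
    ∃ d, D.hasDepth C a d := by
  classical
  have hex : ∃ d, D.lefin a (D.r d C) := ⟨m, h⟩
  exact ⟨Nat.find hex, Nat.find_spec hex, fun j hj => Nat.find_min hex hj⟩

namespace BaseAxioms

theorem mem_ell_self (hb : D.BaseAxioms) (A : D.R) (m : ℕ) : A ∈ D.ell (D.r m A) A :=
  ⟨hb.le_refl A, m, rfl⟩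

theorem r_eq_of_mem_ell (hb : D.BaseAxioms) {C' C : D.R} {m : ℕ}
    (h : C' ∈ D.ell (D.r m C) C) {j : ℕ} (hj : j ≤ m) : D.r j C' = D.r j C := by
  obtain ⟨-, m', hm'⟩ := h
  obtain ⟨rfl, hlt⟩ := hb.a1c C' C m' m hm'
  rcases hj.lt_or_eq with hj | rfl
  · exact hlt j hj
  · exact hm'

theorem mem_ell_trans (hb : D.BaseAxioms) {C₂ C₁ C : D.R} {m : ℕ}
    (h₂ : C₂ ∈ D.ell (D.r m C₁) C₁) (h₁ : C₁ ∈ D.ell (D.r m C) C) :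
    C₂ ∈ D.ell (D.r m C) C :=
  ⟨hb.le_trans _ _ _ h₂.1 h₁.1, m, by
    rw [hb.r_eq_of_mem_ell h₂ le_rfl, hb.r_eq_of_mem_ell h₁ le_rfl]⟩

theorem rset_mono (hb : D.BaseAxioms) {C' C : D.R} (h : D.le C' C) (j : ℕ) (a : D.Ap) :
    D.rset j a C' ⊆ D.rset j a C := by
  rintro _ ⟨E, ⟨hE, hEa⟩, rfl⟩
  exact ⟨E, ⟨hb.le_trans _ _ _ hE h, hEa⟩, rfl⟩

theorem hasDepth_of_mem_ell (hb : D.BaseAxioms) {C' C : D.R} {a : D.Ap} {d : ℕ}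
    (hC' : C' ∈ D.ell (D.r d C) C) (h : D.hasDepth C a d) : D.hasDepth C' a d :=
  (hasDepth_congr fun _ hj => hb.r_eq_of_mem_ell hC' hj).mpr h

theorem ARres_anti (hb : D.BaseAxioms) {A' A : D.R} (h : D.le A' A) (k : ℕ) :
    D.ARres k A' ⊆ D.ARres k A := by
  rintro a ⟨ha, m, hm⟩
  obtain ⟨m', hm'⟩ := (hb.a2b A' A).mp h m
  exact ⟨ha, m', hb.lefin_trans _ _ _ hm hm'⟩

theorem r_mem_ARres_of_le (hb : D.BaseAxioms) {C A : D.R} (h : D.le C A) (k : ℕ) :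
    D.r k C ∈ D.ARres k A :=
  ⟨⟨C, rfl⟩, (hb.a2b C A).mp h k⟩

end BaseAxioms

theorem IsFusionSeq.r_eq (hb : D.BaseAxioms) {A : ℕ → D.R} (hA : IsFusionSeq A) {j m : ℕ}
    (h : j ≤ m) : D.r j (A m) = D.r j (A j) := by
  induction m, h using Nat.le_induction with
  | base => rfl
  | succ m hjm ih => rw [hb.r_eq_of_mem_ell (hA m) hjm, ih]

theorem IsFusionSeq.le (hb : D.BaseAxioms) {A : ℕ → D.R} (hA : IsFusionSeq A) {m m' : ℕ}
    (h : m ≤ m') : D.le (A m') (A m) := by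
  induction m', h using Nat.le_induction with
  | base => exact hb.le_refl _
  | succ m' _ ih => exact hb.le_trans _ _ _ (hA m').1 ih

theorem IsFusionSeq.exists_limit (hb : D.BaseAxioms) (hRcl : D.RClosed) {A : ℕ → D.R}
    (hA : IsFusionSeq A) : ∃ L, (∀ j, D.r j L = D.r j (A j)) ∧ ∀ m, D.le L (A m) := by
  obtain ⟨L, hL⟩ : ∃ L, ∀ j, D.r j L = D.r j (A j) := by
    let _ : TopologicalSpace D.Ap := ⊥
    have : DiscreteTopology D.Ap := ⟨rfl⟩
    have htends : Filter.Tendsto (fun m j => D.r j (A m)) Filter.atTop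
        (𝓝 fun j => D.r j (A j)) :=
      tendsto_pi_nhds.mpr fun j =>
        tendsto_atTop_of_eventually_const fun m hm => IsFusionSeq.r_eq hb hA hm
    obtain ⟨L, hL⟩ := hRcl.mem_of_tendsto htends (.of_forall fun m => ⟨A m, rfl⟩)
    exact ⟨L, congrFun hL⟩
  refine ⟨L, hL, fun m => (hb.a2b L (A m)).mpr fun j => ?_⟩
  rcases le_total j m with hjm | hmj
  · exact ⟨j, by rw [hL j, IsFusionSeq.r_eq hb hA hjm]; exact hb.lefin_refl _⟩
  · rw [hL j]
    exact (hb.a2b _ _).mp (IsFusionSeq.le hb hA hmj) j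

namespace BaseAxioms

theorem exists_le_r_eq_of_mem_ARres (hb : D.BaseAxioms) {k : ℕ} {A : D.R} {b : D.Ap}
    (h : b ∈ D.ARres k A) : ∃ C, D.le C A ∧ D.r k C = b := by
  obtain ⟨⟨C₀, hC₀⟩, m, hm⟩ := h
  obtain ⟨d, hd⟩ := exists_hasDepth hm
  obtain ⟨C, hCA, j, hj⟩ := hb.a3a A b d hd A (hb.mem_ell_self A d)
  obtain ⟨rfl, -⟩ := hb.a1c C C₀ j k (hj.trans hC₀.symm)
  exact ⟨C, hCA, hj⟩

theorem exists_mem_ell_forall_mem {ι : Type*} (hb : D.BaseAxioms) (s : Finset ι)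
    (P : ι → D.R → Prop) (hP : ∀ i C₁ C₂, D.le C₂ C₁ → P i C₁ → P i C₂) {d : ℕ} {C : D.R}
    (hs : ∀ i ∈ s, ∀ C' ∈ D.ell (D.r d C) C, ∃ C'' ∈ D.ell (D.r d C') C', P i C'') :
    ∃ C' ∈ D.ell (D.r d C) C, ∀ i ∈ s, P i C' := by
  classical
  induction s using Finset.induction_on with
  | empty => exact ⟨C, hb.mem_ell_self C d, by simp⟩
  | @insert i s _ ih =>
    obtain ⟨C₁, hC₁, hs₁⟩ := ih fun j hj => hs j (Finset.mem_insert_of_mem hj)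
    obtain ⟨C₂, hC₂, hi⟩ := hs i (Finset.mem_insert_self i s) C₁ hC₁
    refine ⟨C₂, hb.mem_ell_trans hC₂ hC₁, fun j hj => ?_⟩
    rcases Finset.mem_insert.mp hj with rfl | hj
    · exact hi
    · exact hP j C₁ C₂ hC₂.1 (hs₁ j hj)

theorem exists_mem_ell_rset_monochromatic (hb : D.BaseAxioms) {ι : Type*} [Finite ι]
    (c : D.Ap → ι) {k d : ℕ} {a : D.Ap} (ha : D.len a k) {C : D.R} (hC : D.hasDepth C a d) :
    ∃ C' ∈ D.ell (D.r d C) C, ∃ i, ∀ b ∈ D.rset (k + 1) a C', c b = i := by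
  classical
  have := Fintype.ofFinite ι
  let O : ι → Set D.Ap := fun i => {b | b ∈ D.AR (k + 1) ∧ c b = i}
  obtain ⟨C', hC', hdich⟩ := hb.exists_mem_ell_forall_mem Finset.univ
    (fun i C' => D.rset (k + 1) a C' ⊆ O i ∨ D.rset (k + 1) a C' ∩ O i = ∅)
    (fun i C₁ C₂ h₂₁ => Or.imp (hb.rset_mono h₂₁ _ _).trans fun h =>
      Set.subset_empty_iff.mp (h ▸ Set.inter_subset_inter_left _ (hb.rset_mono h₂₁ _ _)))
    (fun i _ C' hC' =>
      hb.a4 C' a d k (O i) (hb.hasDepth_of_mem_ell hC' hC) ha fun _ hmem => hmem.1)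
  -- A.3(a) gives an extension `r_{k+1}(E)`; its colour class meets, hence contains, `rset`.
  obtain ⟨E, hE⟩ := hb.a3a C' a d (hb.hasDepth_of_mem_ell hC' hC) C' (hb.mem_ell_self C' d)
  have hbO : D.r (k + 1) E ∈ D.rset (k + 1) a C' ∩ O (c (D.r (k + 1) E)) :=
    ⟨⟨E, hE, rfl⟩, ⟨E, rfl⟩, rfl⟩
  refine ⟨C', hC', c (D.r (k + 1) E), fun b hmem => ?_⟩
  rcases hdich _ (Finset.mem_univ _) with hsub | hdisj
  · exact (hsub hmem).2
  · exact absurd (hdisj ▸ hbO) (Set.notMem_empty _)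

theorem exists_mem_ell_forall_rset_monochromatic (hb : D.BaseAxioms) {ι : Type*} [Finite ι]
    (c : D.Ap → ι) (k m : ℕ) (C : D.R) :
    ∃ C' ∈ D.ell (D.r m C) C, ∀ a, D.len a k → D.hasDepth C a m →
      ∃ i, ∀ b ∈ D.rset (k + 1) a C', c b = i := by
  obtain ⟨C', hC', h⟩ := hb.exists_mem_ell_forall_mem (hb.a2a (D.r m C)).toFinset
    (fun a C' => D.len a k → D.hasDepth C a m → ∃ i, ∀ b ∈ D.rset (k + 1) a C', c b = i)
    (fun a C₁ C₂ h₂₁ h ha hd =>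
      (h ha hd).imp fun i hi b hmem => hi b (hb.rset_mono h₂₁ _ _ hmem))
    (fun a _ C' hC' => by
      by_cases hd : D.len a k ∧ D.hasDepth C a m
      · obtain ⟨C'', hC'', hmono⟩ :=
          hb.exists_mem_ell_rset_monochromatic c hd.1 (hb.hasDepth_of_mem_ell hC' hd.2)
        exact ⟨C'', hC'', fun _ _ => hmono⟩
      · exact ⟨C', hb.mem_ell_self C' m, fun ha hd' => absurd ⟨ha, hd'⟩ hd⟩)
  exact ⟨C', hC', fun a ha hd => h a (Set.Finite.mem_toFinset _ |>.mpr hd.1) ha hd⟩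

theorem exists_le_forall_ARres_rset_monochromatic (hb : D.BaseAxioms) (hRcl : D.RClosed)
    {ι : Type*} [Finite ι] (c : D.Ap → ι) (k : ℕ) (B : D.R) :
    ∃ L, D.le L B ∧ ∀ a ∈ D.ARres k L, ∃ i, ∀ b ∈ D.rset (k + 1) a L, c b = i := by
  choose step hstep using hb.exists_mem_ell_forall_rset_monochromatic c k
  let A : ℕ → D.R := fun m => Nat.rec B step m
  have hA : IsFusionSeq A := fun m => (hstep m (A m)).1
  obtain ⟨L, hLr, hLle⟩ := IsFusionSeq.exists_limit hb hRcl hA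
  refine ⟨L, hLle 0, fun a ⟨ha, m, hm⟩ => ?_⟩
  obtain ⟨d, hd⟩ := exists_hasDepth hm
  -- `a` has the same depth `d` in `A d` as in `L`, so it was dealt with at stage `d`.
  have hdA : D.hasDepth (A d) a d :=
    (hasDepth_congr fun j hj => (IsFusionSeq.r_eq hb hA hj).trans (hLr j).symm).mpr hd
  obtain ⟨i, hi⟩ := (hstep d (A d)).2 a ha hdA
  exact ⟨i, fun b hmem => hi b (hb.rset_mono (hLle (d + 1)) _ _ hmem)⟩

theorem exists_le_forall_ARres_eq (hb : D.BaseAxioms) (hRcl : D.RClosed) {ι : Type*}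
    [Finite ι] (k : ℕ) (B : D.R) (c : D.Ap → ι) :
    ∃ A, D.le A B ∧ ∃ i, ∀ a ∈ D.ARres k A, c a = i := by
  induction k generalizing B c with
  | zero =>
    refine ⟨B, hb.le_refl B, c (D.r 0 B), ?_⟩
    rintro _ ⟨⟨C, rfl⟩, -⟩
    rw [hb.a1a C B]
  | succ k ih =>
    classical
    obtain ⟨L, hLB, hL⟩ := hb.exists_le_forall_ARres_rset_monochromatic hRcl c k B
    let c' : D.Ap → ι := fun a =>
      if h : (D.ell a L).Nonempty then c (D.r (k + 1) h.some) else c a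
    obtain ⟨A, hAL, i, hi⟩ := ih L c'
    refine ⟨A, hb.le_trans _ _ _ hAL hLB, i, fun b hbA => ?_⟩
    obtain ⟨C, hCA, rfl⟩ := hb.exists_le_r_eq_of_mem_ARres hbA
    have haA : D.r k C ∈ D.ARres k A := hb.r_mem_ARres_of_le hCA k
    obtain ⟨j, hj⟩ := hL _ (hb.ARres_anti hAL k haA)
    have hCL : C ∈ D.ell (D.r k C) L := ⟨hb.le_trans _ _ _ hCA hAL, k, rfl⟩
    have hne : (D.ell (D.r k C) L).Nonempty := ⟨C, hCL⟩
    calc c (D.r (k + 1) C) = j := hj _ ⟨C, hCL, rfl⟩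
      _ = c' (D.r k C) := by
        rw [show c' (D.r k C) = _ from dif_pos hne]; exact (hj _ ⟨_, hne.some_mem, rfl⟩).symm
      _ = i := hi _ haA

end BaseAxioms

end RamseyBase

/-- **Lemma (abstract Ramsey theorem for finite approximations).**  If
`(R, ≤, r)` satisfies axioms A.1–A.4 and `R` is metrically closed in `(AR)^ℕ`,
then for every `k < ω`, every `B ∈ R`, and every finite coloring of `AR_k`,
there exists `A ≤ B` such that `AR_k|A` is monochromatic. -/
theorem abstract_ramsey_approx
    (D : RamseyBase) (hbase : D.BaseAxioms) (hRcl : D.RClosed)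
    (k : ℕ) (B : D.R) (n : ℕ) (c : D.Ap → Fin n) :
    ∃ A : D.R, D.le A B ∧ ∃ i : Fin n, ∀ a ∈ D.ARres k A, c a = i :=
  hbase.exists_le_forall_ARres_eq hRcl k B c
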